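/- Let A ∈ GL(d, ℝ) be expansive, M > 0, N ∈ ℕ, Q ⊆ ℝ^d bounded. Let φ, ϕ be Schwartz functions, and for i ∈ ℤ and δ > 0 set φ_i(x) = |det A|^i φ(A^i x) and ϕ_δ(x) = δ^d ϕ(δx). Then there exists C = C(d,M,N,Q,ϕ,φ,A) > 0 such that: if i, ℓ ∈ ℤ and δ > 0 satisfy |i − ℓ| ≤ N and B_δ(η) ⊆ (A*)^ℓ Q for some η ∈ ℝ^d, then (|ϕ_δ| ∗ |φ_i|)(x) ≤ C·δ^d·(1 + |δx|)^{−M} for all x ∈ ℝ^d. -/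

import Mathlib

open MeasureTheory
open scoped Pointwise

/-- A real matrix is expansive if it is invertible and all its complex eigenvalues
have absolute value strictly greater than `1`. -/
def Expansive {d : ℕ} (A : Matrix (Fin d) (Fin d) ℝ) : Prop :=
  IsUnit A ∧ ∀ μ ∈ spectrum ℂ (A.map (algebraMap ℝ ℂ)), 1 < ‖μ‖

/-- The action of a matrix on Euclidean space. -/
def ms {d : ℕ} (A : Matrix (Fin d) (Fin d) ℝ) (x : EuclideanSpace ℝ (Fin d)) :
    EuclideanSpace ℝ (Fin d) := WithLp.toLp 2 (A.mulVec x)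

/-! The ball `B_δ(η)` inside `(A*)^ℓ Q ⊆ B_R(0)` forces `‖(A*)^(-ℓ)‖ ≤ 4R/δ`, hence
`‖A^(-ℓ)‖ ≤ 4R/δ` since transposition preserves the operator norm; as `|i - ℓ| ≤ N` this gives
`δ‖z‖ ≤ c‖A^i z‖` with `c` independent of `i, ℓ, δ, η`. Peetre's inequality
`1 + δ‖x‖ ≤ (1 + δ‖y‖)(1 + δ‖x - y‖)` splits the weight `(1 + δ‖x‖)^m`, `m = ⌈M⌉`, between the two factors:
the decay of `ϕ` absorbs `(1 + δ‖y‖)^m`, and `d + 1` further orders of decay of `φ` at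
`A^i(x - y)` leave a kernel whose integral, after substituting `u = A^i(x - y)`, cancels
`|det A|^i`. -/

open Metric Set
open scoped Matrix Matrix.Norms.L2Operator

theorem ContinuousLinearMap.opNorm_le_of_mapsTo_ball {E F : Type*} [NormedAddCommGroup E]
    [NormedSpace ℝ E] [NormedAddCommGroup F] [NormedSpace ℝ F] (T : E →L[ℝ] F)
    {η : E} {δ R : ℝ} (hδ : 0 < δ) (hT : MapsTo T (ball η δ) (closedBall 0 R)) :
    ‖T‖ ≤ 4 * R / δ := by
  have hTη : ‖T η‖ ≤ R := mem_closedBall_zero_iff.mp (hT (mem_ball_self hδ))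
  have hR : 0 ≤ R := (norm_nonneg _).trans hTη
  refine T.opNorm_le_of_shell (c := (2 : ℝ)) hδ (by positivity) (by norm_num) fun v hv₁ hv₂ => ?_
  have hTv : ‖T (η + v)‖ ≤ R :=
    mem_closedBall_zero_iff.mp (hT (by simpa [mem_ball, dist_eq_norm] using hv₂))
  have hv₁' : δ ≤ 2 * ‖v‖ := by
    rw [Real.norm_two, div_le_iff₀ two_pos] at hv₁; linarith
  calc ‖T v‖ = ‖T (η + v) - T η‖ := by rw [map_add, add_sub_cancel_left]
    _ ≤ 2 * R := (norm_sub_le _ _).trans (by linarith)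
    _ ≤ 4 * R / δ * ‖v‖ := by
      rw [div_mul_eq_mul_div, le_div_iff₀ hδ]; nlinarith

theorem one_add_mul_norm_le_mul {E : Type*} [SeminormedAddCommGroup E] {δ : ℝ} (hδ : 0 ≤ δ)
    (x y : E) : 1 + δ * ‖x‖ ≤ (1 + δ * ‖y‖) * (1 + δ * ‖x - y‖) := by
  nlinarith [norm_le_insert' x y,
    mul_nonneg (mul_nonneg hδ (norm_nonneg y)) (mul_nonneg hδ (norm_nonneg (x - y)))]

theorem SchwartzMap.exists_norm_mul_one_add_norm_pow_le {E F : Type*} [NormedAddCommGroup E]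
    [NormedSpace ℝ E] [NormedAddCommGroup F] [NormedSpace ℝ F] (f : SchwartzMap E F) (k : ℕ) :
    ∃ C, 0 ≤ C ∧ ∀ x, ‖f x‖ * (1 + ‖x‖) ^ k ≤ C := by
  refine ⟨2 ^ k * (Finset.Iic (k, 0)).sup (fun m => SchwartzMap.seminorm ℝ m.1 m.2) f,
    by positivity, fun x => ?_⟩
  simpa [norm_iteratedFDeriv_zero, mul_comm] using
    f.one_add_le_sup_seminorm_apply (𝕜 := ℝ) (m := (k, 0)) le_rfl le_rfl x

section HaarLinearMap

variable {E F : Type*} [NormedAddCommGroup E] [NormedSpace ℝ E] [FiniteDimensional ℝ E]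
  [MeasurableSpace E] [BorelSpace E] (μ : Measure E) [μ.IsAddHaarMeasure] [NormedAddCommGroup F]

theorem integrable_inv_one_add_norm_pow {k : ℕ} (hk : Module.finrank ℝ E < k) :
    Integrable (fun x : E => ((1 + ‖x‖) ^ k)⁻¹) μ := by
  refine (integrable_one_add_norm (μ := μ) (r := k) (by exact_mod_cast hk)).congr
    (ae_of_all _ fun x => ?_)
  dsimp only
  rw [Real.rpow_neg (by positivity), Real.rpow_natCast]

theorem measurableEmbedding_of_det_ne_zero {f : E →ₗ[ℝ] E} (hf : LinearMap.det f ≠ 0) :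
    MeasurableEmbedding f :=
  (LinearMap.equivOfDetNeZero f hf).toContinuousLinearEquiv.toHomeomorph.measurableEmbedding

theorem integral_comp_linearMap [NormedSpace ℝ F] {f : E →ₗ[ℝ] E} (hf : LinearMap.det f ≠ 0)
    (g : E → F) : ∫ x, g (f x) ∂μ = |LinearMap.det f|⁻¹ • ∫ y, g y ∂μ := by
  rw [← (measurableEmbedding_of_det_ne_zero hf).integral_map,
    Measure.map_linearMap_addHaar_eq_smul_addHaar μ hf, integral_smul_measure,
    ENNReal.toReal_ofReal (abs_nonneg _), abs_inv]

variable {μ} in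
theorem MeasureTheory.Integrable.comp_linearMap {g : E → F} (hg : Integrable g μ)
    {f : E →ₗ[ℝ] E} (hf : LinearMap.det f ≠ 0) : Integrable (fun x => g (f x)) μ := by
  refine (measurableEmbedding_of_det_ne_zero hf).integrable_map_iff.mp ?_
  rw [Measure.map_linearMap_addHaar_eq_smul_addHaar μ hf]
  exact hg.smul_measure ENNReal.ofReal_ne_top

end HaarLinearMap

theorem Matrix.det_zpow {n K : Type*} [Fintype n] [DecidableEq n] [Field K] (A : Matrix n n K)
    (k : ℤ) : (A ^ k).det = A.det ^ k := by
  obtain k | k := k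
  · rw [Int.ofNat_eq_natCast, zpow_natCast, zpow_natCast, Matrix.det_pow]
  · rw [zpow_negSucc, zpow_negSucc, Matrix.det_nonsing_inv, Matrix.det_pow, Ring.inverse_eq_inv']

theorem Matrix.l2_opNorm_transpose {m n : Type*} [Fintype m] [Fintype n] [DecidableEq m]
    [DecidableEq n] (B : Matrix m n ℝ) : ‖Bᵀ‖ = ‖B‖ := by
  rw [← Matrix.conjTranspose_eq_transpose_of_trivial, Matrix.l2_opNorm_conjTranspose]

section EuclideanMatrix

variable {d : ℕ}

theorem ms_eq_toEuclideanCLM (B : Matrix (Fin d) (Fin d) ℝ) :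
    ms B = Matrix.toEuclideanCLM (𝕜 := ℝ) B := rfl

theorem norm_ms_le (B : Matrix (Fin d) (Fin d) ℝ) (x : EuclideanSpace ℝ (Fin d)) :
    ‖ms B x‖ ≤ ‖B‖ * ‖x‖ :=
  (Matrix.toEuclideanCLM (𝕜 := ℝ) B).le_opNorm x

theorem ms_zpow_neg_ms_zpow {A : Matrix (Fin d) (Fin d) ℝ} (hA : IsUnit A.det) (k : ℤ)
    (x : EuclideanSpace ℝ (Fin d)) : ms (A ^ (-k)) (ms (A ^ k) x) = x := by
  simp only [ms, Matrix.mulVec_mulVec, ← Matrix.zpow_add hA, neg_add_cancel, zpow_zero,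
    Matrix.one_mulVec]

theorem norm_zpow_neg_le_of_ball_subset {A : Matrix (Fin d) (Fin d) ℝ} (hA : IsUnit A.det)
    {Q : Set (EuclideanSpace ℝ (Fin d))} {R : ℝ} (hQ : Q ⊆ closedBall 0 R) {ℓ : ℤ}
    {η : EuclideanSpace ℝ (Fin d)} {δ : ℝ} (hδ : 0 < δ)
    (hball : ball η δ ⊆ ms (Aᵀ ^ ℓ) '' Q) : ‖A ^ (-ℓ)‖ ≤ 4 * R / δ := by
  have hmaps : MapsTo (ms (Aᵀ ^ (-ℓ))) (ball η δ) (closedBall 0 R) := by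
    intro z hz
    obtain ⟨q, hq, rfl⟩ := hball hz
    rw [ms_zpow_neg_ms_zpow (by rwa [Matrix.det_transpose])]
    exact hQ hq
  rw [← Matrix.l2_opNorm_transpose, Matrix.transpose_zpow, ← Matrix.l2_opNorm_toEuclideanCLM]
  rw [ms_eq_toEuclideanCLM] at hmaps
  exact ContinuousLinearMap.opNorm_le_of_mapsTo_ball _ hδ hmaps

theorem exists_mul_norm_le_mul_norm_ms_zpow {A : Matrix (Fin d) (Fin d) ℝ}
    (hA : IsUnit A.det) (N : ℕ) {Q : Set (EuclideanSpace ℝ (Fin d))}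
    (hQ : Bornology.IsBounded Q) :
    ∃ c, 0 ≤ c ∧ ∀ (i ℓ : ℤ) (δ : ℝ) (η : EuclideanSpace ℝ (Fin d)),
      0 < δ → |i - ℓ| ≤ (N : ℤ) → ball η δ ⊆ ms (Aᵀ ^ ℓ) '' Q →
      ∀ z, δ * ‖z‖ ≤ c * ‖ms (A ^ i) z‖ := by
  obtain ⟨R, hR, hQR⟩ := hQ.subset_closedBall_lt 0 0
  set K := ∑ k ∈ Finset.Icc (-(N : ℤ)) N, ‖A ^ k‖
  refine ⟨4 * R * K, by positivity, fun i ℓ δ η hδ hiℓ hball z => ?_⟩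
  have hK : ‖A ^ (ℓ - i)‖ ≤ K := by
    refine Finset.single_le_sum (f := fun k => ‖A ^ k‖) (fun k _ => norm_nonneg _) ?_
    rw [Finset.mem_Icc]
    constructor <;> linarith [abs_le.mp hiℓ]
  have hinv : ‖A ^ (-i)‖ ≤ K * (4 * R / δ) := by
    rw [show -i = (ℓ - i) + -ℓ by ring, Matrix.zpow_add hA]
    exact (Matrix.l2_opNorm_mul _ _).trans <| mul_le_mul hK
      (norm_zpow_neg_le_of_ball_subset hA hQR hδ hball) (norm_nonneg _) (hK.trans' (norm_nonneg _))
  calc δ * ‖z‖ = δ * ‖ms (A ^ (-i)) (ms (A ^ i) z)‖ := by rw [ms_zpow_neg_ms_zpow hA]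
    _ ≤ δ * (K * (4 * R / δ) * ‖ms (A ^ i) z‖) :=
      mul_le_mul_of_nonneg_left ((norm_ms_le _ _).trans
        (mul_le_mul_of_nonneg_right hinv (norm_nonneg _))) hδ.le
    _ = 4 * R * K * ‖ms (A ^ i) z‖ := by field_simp

end EuclideanMatrix

section Convolution

variable {d : ℕ} {ϕ φ : EuclideanSpace ℝ (Fin d) → ℂ} {B : Matrix (Fin d) (Fin d) ℝ}
  {δ c C₁ C₂ : ℝ} {m : ℕ}

theorem norm_dilate_mul_norm_comp_mul_le (hδ : 0 < δ) (hc : 0 ≤ c)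
    (hscale : ∀ z, δ * ‖z‖ ≤ c * ‖ms B z‖) (hϕ : ∀ y, ‖ϕ y‖ * (1 + ‖y‖) ^ m ≤ C₁)
    (hφ : ∀ w, ‖φ w‖ * (1 + ‖w‖) ^ (m + (d + 1)) ≤ C₂) (x y : EuclideanSpace ℝ (Fin d)) :
    ‖(δ : ℂ) ^ d * ϕ (δ • y)‖ * ‖((|B.det| : ℝ) : ℂ) * φ (ms B (x - y))‖ * (1 + δ * ‖x‖) ^ m ≤
      C₁ * C₂ * (1 + c) ^ m * δ ^ d * |B.det| * ((1 + ‖ms B (x - y)‖) ^ (d + 1))⁻¹ := by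
  set w := ms B (x - y)
  have hϕy : ‖ϕ (δ • y)‖ * (1 + δ * ‖y‖) ^ m ≤ C₁ := by
    simpa only [norm_smul, Real.norm_eq_abs, abs_of_pos hδ] using hϕ (δ • y)
  have hφw : ‖φ w‖ * (1 + ‖w‖) ^ m ≤ C₂ * ((1 + ‖w‖) ^ (d + 1))⁻¹ := by
    rw [← div_eq_mul_inv, le_div_iff₀ (by positivity), mul_assoc, ← pow_add]
    exact hφ w
  have hxy : 1 + δ * ‖x - y‖ ≤ (1 + c) * (1 + ‖w‖) := by
    nlinarith [hscale (x - y), norm_nonneg w]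
  have hpeetre : (1 + δ * ‖x‖) ^ m ≤ (1 + δ * ‖y‖) ^ m * ((1 + c) ^ m * (1 + ‖w‖) ^ m) := by
    rw [← mul_pow, ← mul_pow]
    gcongr
    exact (one_add_mul_norm_le_mul hδ.le x y).trans (by gcongr)
  have hC₁ : 0 ≤ C₁ := (by positivity : 0 ≤ ‖ϕ (δ • y)‖ * (1 + δ * ‖y‖) ^ m).trans hϕy
  calc ‖(δ : ℂ) ^ d * ϕ (δ • y)‖ * ‖((|B.det| : ℝ) : ℂ) * φ w‖ * (1 + δ * ‖x‖) ^ m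
      = δ ^ d * |B.det| * ‖ϕ (δ • y)‖ * ‖φ w‖ * (1 + δ * ‖x‖) ^ m := by
        simp only [norm_mul, norm_pow, Complex.norm_real, Real.norm_eq_abs, abs_of_pos hδ,
          abs_abs]
        ring
    _ ≤ δ ^ d * |B.det| * ‖ϕ (δ • y)‖ * ‖φ w‖ *
        ((1 + δ * ‖y‖) ^ m * ((1 + c) ^ m * (1 + ‖w‖) ^ m)) := by gcongr
    _ = δ ^ d * |B.det| * (1 + c) ^ m * (‖ϕ (δ • y)‖ * (1 + δ * ‖y‖) ^ m) *
        (‖φ w‖ * (1 + ‖w‖) ^ m) := by ring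
    _ ≤ δ ^ d * |B.det| * (1 + c) ^ m * C₁ * (C₂ * ((1 + ‖w‖) ^ (d + 1))⁻¹) := by
        gcongr
    _ = C₁ * C₂ * (1 + c) ^ m * δ ^ d * |B.det| * ((1 + ‖w‖) ^ (d + 1))⁻¹ := by ring

theorem integral_norm_dilate_mul_norm_comp_mul_le (hB : IsUnit B.det) (hδ : 0 < δ) (hc : 0 ≤ c)
    (hscale : ∀ z, δ * ‖z‖ ≤ c * ‖ms B z‖) (hϕ : ∀ y, ‖ϕ y‖ * (1 + ‖y‖) ^ m ≤ C₁)
    (hφ : ∀ w, ‖φ w‖ * (1 + ‖w‖) ^ (m + (d + 1)) ≤ C₂) (x : EuclideanSpace ℝ (Fin d)) :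
    (∫ y, ‖(δ : ℂ) ^ d * ϕ (δ • y)‖ * ‖((|B.det| : ℝ) : ℂ) * φ (ms B (x - y))‖) *
        (1 + δ * ‖x‖) ^ m ≤
      C₁ * C₂ * (1 + c) ^ m * (∫ u : EuclideanSpace ℝ (Fin d), ((1 + ‖u‖) ^ (d + 1))⁻¹) *
        δ ^ d := by
  set Φ : EuclideanSpace ℝ (Fin d) → ℝ := fun u => ((1 + ‖u‖) ^ (d + 1))⁻¹
  have hdet : LinearMap.det (Matrix.toEuclideanLin B) ≠ 0 := by
    rw [LinearMap.det_toLpLin]; exact hB.ne_zero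
  have hΦ : Integrable Φ := integrable_inv_one_add_norm_pow volume (by simp)
  have hΦB : Integrable fun y => Φ (ms B (x - y)) := (hΦ.comp_linearMap hdet).comp_sub_left x
  have hΦB_integral : ∫ y, Φ (ms B (x - y)) = |B.det|⁻¹ * ∫ u, Φ u := by
    rw [integral_sub_left_eq_self (fun z => Φ (ms B z)) volume x]
    have := integral_comp_linearMap volume hdet Φ
    rwa [LinearMap.det_toLpLin, smul_eq_mul] at this
  calc (∫ y, ‖(δ : ℂ) ^ d * ϕ (δ • y)‖ * ‖((|B.det| : ℝ) : ℂ) * φ (ms B (x - y))‖) *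
        (1 + δ * ‖x‖) ^ m
      = ∫ y, ‖(δ : ℂ) ^ d * ϕ (δ • y)‖ * ‖((|B.det| : ℝ) : ℂ) * φ (ms B (x - y))‖ *
        (1 + δ * ‖x‖) ^ m := (integral_mul_const _ _).symm
    _ ≤ ∫ y, C₁ * C₂ * (1 + c) ^ m * δ ^ d * |B.det| * Φ (ms B (x - y)) :=
        integral_mono_of_nonneg (ae_of_all _ fun y => by positivity) (hΦB.const_mul _)
          (ae_of_all _ (norm_dilate_mul_norm_comp_mul_le hδ hc hscale hϕ hφ x))
    _ = C₁ * C₂ * (1 + c) ^ m * (∫ u, Φ u) * δ ^ d := by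
        have hB' : |B.det| ≠ 0 := abs_ne_zero.mpr hB.ne_zero
        rw [integral_const_mul, hΦB_integral]
        field_simp

end Convolution

theorem stmt10_general {d : ℕ} (A : Matrix (Fin d) (Fin d) ℝ) (hA : Expansive A)
    (M : ℝ) (N : ℕ)
    (Q : Set (EuclideanSpace ℝ (Fin d))) (hQ : Bornology.IsBounded Q)
    (φ ϕ : SchwartzMap (EuclideanSpace ℝ (Fin d)) ℂ) :
    ∃ C : ℝ, 0 < C ∧ ∀ (i ℓ : ℤ) (δ : ℝ) (η : EuclideanSpace ℝ (Fin d)),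
      0 < δ → |i - ℓ| ≤ (N : ℤ) → Metric.ball η δ ⊆ ms (A.transpose ^ ℓ) '' Q →
      ∀ x : EuclideanSpace ℝ (Fin d),
        (∫ y : EuclideanSpace ℝ (Fin d),
            ‖δ ^ d * ϕ (δ • y)‖ *
              ‖|A.det| ^ i * φ (ms (A ^ i) (x - y))‖) ≤
          C * δ ^ d * (1 + δ * ‖x‖) ^ (-M) := by
  have hdet : IsUnit A.det := (Matrix.isUnit_iff_isUnit_det A).mp hA.1
  obtain ⟨c, hc, hscale⟩ := exists_mul_norm_le_mul_norm_ms_zpow hdet N hQ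
  obtain ⟨C₁, hC₁, hϕ⟩ := ϕ.exists_norm_mul_one_add_norm_pow_le ⌈M⌉₊
  obtain ⟨C₂, hC₂, hφ⟩ := φ.exists_norm_mul_one_add_norm_pow_le (⌈M⌉₊ + (d + 1))
  set I := ∫ u : EuclideanSpace ℝ (Fin d), ((1 + ‖u‖) ^ (d + 1))⁻¹
  have hI : 0 ≤ I := integral_nonneg fun u => by positivity
  refine ⟨C₁ * C₂ * (1 + c) ^ ⌈M⌉₊ * I + 1, by positivity, ?_⟩
  intro i ℓ δ η hδ hiℓ hball x
  have hcoef : ((|A.det| : ℝ) : ℂ) ^ i = ((|(A ^ i).det| : ℝ) : ℂ) := by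
    rw [Matrix.det_zpow, abs_zpow, Complex.ofReal_zpow]
  have hb : 1 ≤ 1 + δ * ‖x‖ := le_add_of_nonneg_right (by positivity)
  have hbM : ((1 + δ * ‖x‖) ^ ⌈M⌉₊)⁻¹ ≤ (1 + δ * ‖x‖) ^ (-M) := by
    rw [← Real.rpow_natCast, ← Real.rpow_neg (by positivity)]
    exact Real.rpow_le_rpow_of_exponent_le hb (neg_le_neg (Nat.le_ceil M))
  have key := integral_norm_dilate_mul_norm_comp_mul_le (hdet.det_zpow i) hδ hc
    (hscale i ℓ δ η hδ hiℓ hball) hϕ hφ x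
  rw [← hcoef, ← le_div_iff₀ (by positivity), div_eq_mul_inv] at key
  refine key.trans (mul_le_mul ?_ hbM (by positivity) (by positivity))
  gcongr
  linarith

/-- Decay estimate for `(|ϕ_δ| ∗ |φ_i|)(x)` when `B_δ(η) ⊆ (A*)^ℓ Q` and `|i - ℓ| ≤ N`,
where `ϕ_δ = δ^d ϕ(δ ·)` and `φ_i = |det A|^i φ(A^i ·)`. -/
theorem stmt10 {d : ℕ} (A : Matrix (Fin d) (Fin d) ℝ) (hA : Expansive A)
    (M : ℝ) (hM : 0 < M) (N : ℕ)
    (Q : Set (EuclideanSpace ℝ (Fin d))) (hQ : Bornology.IsBounded Q)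
    (φ ϕ : SchwartzMap (EuclideanSpace ℝ (Fin d)) ℂ) :
    ∃ C : ℝ, 0 < C ∧ ∀ (i ℓ : ℤ) (δ : ℝ) (η : EuclideanSpace ℝ (Fin d)),
      0 < δ → |i - ℓ| ≤ (N : ℤ) → Metric.ball η δ ⊆ ms (A.transpose ^ ℓ) '' Q →
      ∀ x : EuclideanSpace ℝ (Fin d),
        (∫ y : EuclideanSpace ℝ (Fin d),
            ‖δ ^ d * ϕ (δ • y)‖ *
              ‖|A.det| ^ i * φ (ms (A ^ i) (x - y))‖) ≤
          C * δ ^ d * (1 + δ * ‖x‖) ^ (-M) :=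
  stmt10_general A hA M N Q hQ φ ϕ
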